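/- If the migration kernel is symmetric, i.e. a(0,i) = a(0,−i) for all i ∈ ℤ^d, then Q is reversible for the environment process: for all bounded measurable functions f,g : Ω_𝔎 → ℝ, ∫_{Ω_𝔎} g·(Rf) dQ = ∫_{Ω_𝔎} f·(Rg) dQ. -/

import Mathlib

open MeasureTheory Filter

noncomputable section

/-- The lattice `ℤ^d`. -/
abbrev ZLat (d : ℕ) := Fin d → ℤ

/-- The space of uniformly elliptic environments. -/
abbrev EnvSpace (d K : ℕ) := ZLat d → (Set.Icc (2:ℤ) (K:ℤ) × Set.Icc (2:ℤ) (K:ℤ))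

/-- The shift `T j`. -/
def shiftT {d K : ℕ} (j : ZLat d) (e : EnvSpace d K) : EnvSpace d K := fun i => e (i + j)

/-- Size of the active population at `i`, as a real number. -/
def Nsize {d K : ℕ} (e : EnvSpace d K) (i : ZLat d) : ℝ := ((e i).1 : ℤ)

/-- Size of the dormant population at `i`, as a real number. -/
def Msize {d K : ℕ} (e : EnvSpace d K) (i : ZLat d) : ℝ := ((e i).2 : ℤ)

/-- Total migration rate `c := Σ_{i ≠ 0} a(0,i)`. -/
def cRate {d : ℕ} (a : ZLat d → ZLat d → ℝ) : ℝ := ∑' i : ZLat d, if i = 0 then 0 else a 0 i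

/-- The probability `q_s` of becoming dormant. -/
def qs {d : ℕ} (a : ZLat d → ZLat d → ℝ) (lam : ℝ) (K : ℕ) : ℝ :=
  lam / (cRate a + lam + lam * K)

/-- The step distribution `p̂`. -/
def phat {d : ℕ} (a : ZLat d → ZLat d → ℝ) (lam : ℝ) (K : ℕ) (i : ZLat d) : ℝ :=
  if i = 0 then lam * K / (cRate a + lam * K) else a 0 i / (cRate a + lam * K)

/-- The wake-up probabilities `ω_e(i)`. -/
def omegaE {d K : ℕ} (a : ZLat d → ZLat d → ℝ) (lam : ℝ) (e : EnvSpace d K) (i : ZLat d) : ℝ :=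
  lam * Nsize e i / (Msize e i * (cRate a + lam + lam * K))

/-- `n`-fold convolution power of a function on `ℤ^d`. -/
def convPow {d : ℕ} (p : ZLat d → ℝ) : ℕ → ZLat d → ℝ
  | 0 => fun i => if i = 0 then 1 else 0
  | n + 1 => fun i => ∑' j : ZLat d, convPow p n j * p (i - j)

/-- The Markov operator `R` of the auxiliary environment process. -/
def Rop {d K : ℕ} (a : ZLat d → ZLat d → ℝ) (lam : ℝ)
    (f : EnvSpace d K × Bool → ℝ) : EnvSpace d K × Bool → ℝ := fun x =>
  match x with
  | (e, true) => qs a lam K * f (e, false)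
      + (1 - qs a lam K) * ∑' j : ZLat d, phat a lam K j * f (shiftT j e, true)
  | (e, false) => omegaE a lam e 0 * f (e, true) + (1 - omegaE a lam e 0) * f (e, false)

/-- The strip `G = ℤ^d × {0,1}`. -/
abbrev Gstrip (d : ℕ) := ZLat d × Bool

/-- One-step transition kernel of the subordinate Markov chain in environment `e`. -/
def QK {d K : ℕ} (a : ZLat d → ZLat d → ℝ) (lam : ℝ) (e : EnvSpace d K) :
    Gstrip d → Gstrip d → ℝ
  | (i, true), (j, true) => (1 - qs a lam K) * phat a lam K (j - i)
  | (i, true), (j, false) => if j = i then qs a lam K else 0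
  | (i, false), (j, true) => if j = i then omegaE a lam e i else 0
  | (i, false), (j, false) => if j = i then 1 - omegaE a lam e i else 0

/-- `n`-step transition kernel of the subordinate Markov chain. -/
def QKn {d K : ℕ} (a : ZLat d → ZLat d → ℝ) (lam : ℝ) (e : EnvSpace d K) :
    ℕ → Gstrip d → Gstrip d → ℝ
  | 0 => fun η ξ => if ξ = η then 1 else 0
  | n + 1 => fun η ξ => ∑' ζ : Gstrip d, QKn a lam e n η ζ * QK a lam e ζ ξ

/-- Time-`t` transition kernel of the single-particle dual (uniformization representation). -/
def ptk {d K : ℕ} (a : ZLat d → ZLat d → ℝ) (lam : ℝ) (e : EnvSpace d K) (t : ℝ)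
    (η ξ : Gstrip d) : ℝ :=
  Real.exp (-((cRate a + lam + lam * K) * t)) *
    ∑' n : ℕ, ((cRate a + lam + lam * K) * t) ^ n / (n.factorial : ℝ) * QKn a lam e n η ξ

end

/-! Under `Q` the active layer carries `P̄` and the dormant layer carries `(M₀/N₀) · P̄`, up to
the common factor `1/(1+ρ)`. This weight is exactly the one with `(M₀/N₀) · ω_e(0) = q_s`: the
flux from the active to the dormant layer equals the flux back, so the exchange part of `R` is
symmetric pointwise (`rop_detailed_balance`). What is left is the migration part
`f ↦ Σⱼ p̂(j) f(Tⱼ e)`, which is symmetric in `L²(P̄)` because `P̄` is shift invariant and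
`p̂(-j) = p̂(j)`. -/

section BoundedMeasurable

variable {X : Type*} [MeasurableSpace X]

def IsBoundedMeasurable (f : X → ℝ) : Prop := Measurable f ∧ ∃ C, ∀ x, |f x| ≤ C

namespace IsBoundedMeasurable

variable {f g : X → ℝ}

theorem mul (hf : IsBoundedMeasurable f) (hg : IsBoundedMeasurable g) :
    IsBoundedMeasurable fun x => f x * g x := by
  obtain ⟨hfm, C, hC⟩ := hf
  obtain ⟨hgm, D, hD⟩ := hg
  exact ⟨hfm.mul hgm, C * D, fun x =>
    (norm_mul_le_of_le (hC x) (hD x) : ‖f x * g x‖ ≤ C * D)⟩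

theorem add (hf : IsBoundedMeasurable f) (hg : IsBoundedMeasurable g) :
    IsBoundedMeasurable fun x => f x + g x := by
  obtain ⟨hfm, C, hC⟩ := hf
  obtain ⟨hgm, D, hD⟩ := hg
  exact ⟨hfm.add hgm, C + D, fun x => (abs_add_le _ _).trans (add_le_add (hC x) (hD x))⟩

theorem const (c : ℝ) : IsBoundedMeasurable fun _ : X => c :=
  ⟨measurable_const, |c|, fun _ => le_rfl⟩

theorem sub (hf : IsBoundedMeasurable f) (hg : IsBoundedMeasurable g) :
    IsBoundedMeasurable fun x => f x - g x := by
  obtain ⟨hfm, C, hC⟩ := hf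
  obtain ⟨hgm, D, hD⟩ := hg
  exact ⟨hfm.sub hgm, C + D, fun x => (abs_sub _ _).trans (add_le_add (hC x) (hD x))⟩

theorem comp {Y : Type*} [MeasurableSpace Y] {π : Y → X} (hf : IsBoundedMeasurable f)
    (hπ : Measurable π) : IsBoundedMeasurable fun y => f (π y) :=
  ⟨hf.1.comp hπ, hf.2.imp fun _ hC y => hC (π y)⟩

theorem of_finite [Finite X] [DiscreteMeasurableSpace X] (f : X → ℝ) : IsBoundedMeasurable f :=
  ⟨.of_discrete, (Set.finite_range fun x => |f x|).bddAbove.imp fun _ hC x => hC ⟨x, rfl⟩⟩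

theorem integrable (hf : IsBoundedMeasurable f) (μ : Measure X) [IsFiniteMeasure μ] :
    Integrable f μ :=
  let ⟨C, hC⟩ := hf.2
  .of_bound hf.1.aestronglyMeasurable C (.of_forall hC)

theorem of_slices {h : X × Bool → ℝ} (htrue : IsBoundedMeasurable fun x => h (x, true))
    (hfalse : IsBoundedMeasurable fun x => h (x, false)) : IsBoundedMeasurable h := by
  obtain ⟨h₁, C, hC⟩ := htrue
  obtain ⟨h₀, D, hD⟩ := hfalse
  refine ⟨measurable_from_prod_countable_left (Bool.forall_bool.2 ⟨h₀, h₁⟩), max C D, ?_⟩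
  rintro ⟨x, _ | _⟩
  exacts [(hD x).trans (le_max_right _ _), (hC x).trans (le_max_left _ _)]

end IsBoundedMeasurable

end BoundedMeasurable

theorem Summable.mul_of_abs_le {G : Type*} {p a : G → ℝ} (hp : Summable p) {C : ℝ}
    (ha : ∀ j, |a j| ≤ C) : Summable fun j => p j * a j :=
  .of_norm_bounded (hp.abs.mul_right C) fun j => by
    rw [Real.norm_eq_abs, abs_mul]
    exact mul_le_mul_of_nonneg_left (ha j) (abs_nonneg _)

noncomputable def orbitAvg {G X : Type*} (p : G → ℝ) (T : G → X → X) (f : X → ℝ) (x : X) : ℝ :=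
  ∑' j, p j * f (T j x)

section OrbitAverage

variable {G X : Type*} [MeasurableSpace X]

theorem measurable_tsum_of_summable [Countable G] {t : G → X → ℝ} (ht : ∀ j, Measurable (t j))
    (hs : ∀ x, Summable fun j => t j x) : Measurable fun x => ∑' j, t j x :=
  measurable_of_tendsto_metrizable' atTop (fun s => Finset.measurable_sum s fun j _ => ht j)
    (tendsto_pi_nhds.2 fun x => (hs x).hasSum)

variable {p : G → ℝ} {T : G → X → X} {f g : X → ℝ}

theorem IsBoundedMeasurable.orbitAvg [Countable G] (hp : Summable p)
    (hT : ∀ j, Measurable (T j)) (hf : IsBoundedMeasurable f) :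
    IsBoundedMeasurable (orbitAvg p T f) := by
  obtain ⟨hfm, C, hC⟩ := hf
  have hs (x : X) := hp.mul_of_abs_le fun j => hC (T j x)
  refine ⟨measurable_tsum_of_summable (fun j => (hfm.comp (hT j)).const_mul _) hs,
    (∑' j, |p j|) * C, fun x => ?_⟩
  rw [← tsum_mul_right]
  refine (norm_tsum_le_tsum_norm (hs x).norm).trans <|
    (hs x).norm.tsum_le_tsum (fun j => ?_) (hp.abs.mul_right C)
  rw [Real.norm_eq_abs, abs_mul]
  exact mul_le_mul_of_nonneg_left (hC _) (abs_nonneg _)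

variable {μ : Measure X} [IsFiniteMeasure μ]

theorem integral_mul_orbitAvg [Countable G] (hp : Summable p) (hT : ∀ j, Measurable (T j))
    (hf : IsBoundedMeasurable f) (hg : IsBoundedMeasurable g) :
    ∫ x, g x * orbitAvg p T f x ∂μ = ∑' j, p j * ∫ x, g x * f (T j x) ∂μ := by
  obtain ⟨Cg, hCg⟩ := hg.2
  obtain ⟨Cf, hCf⟩ := hf.2
  have hgf (j : G) : IsBoundedMeasurable fun x => g x * f (T j x) := hg.mul (hf.comp (hT j))
  have hbound (j : G) :
      ∫ x, ‖p j * (g x * f (T j x))‖ ∂μ ≤ |p j| * (Cg * Cf) * μ.real Set.univ :=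
    (Real.le_norm_self _).trans <| norm_integral_le_of_norm_le_const <| .of_forall fun x =>
      (norm_norm _).trans_le <| norm_mul_le_of_le le_rfl <| norm_mul_le_of_le (hCg x) (hCf _)
  simp_rw [orbitAvg, ← tsum_mul_left, ← integral_const_mul, mul_left_comm (g _)]
  have hs : Summable fun j => ∫ x, ‖p j * (g x * f (T j x))‖ ∂μ :=
    .of_nonneg_of_le (fun j => integral_nonneg fun x => norm_nonneg _) hbound
      ((hp.abs.mul_right _).mul_right _)
  exact (integral_tsum_of_summable_integral_norm
    (fun j => ((hgf j).integrable μ).const_mul (p j)) hs).symm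

theorem integral_mul_orbitAvg_comm [AddGroup G] [Countable G] (hp : Summable p)
    (hp_neg : ∀ j, p (-j) = p j) (hT : ∀ j, MeasurePreserving (T j) μ μ)
    (hT_neg : ∀ j x, T j (T (-j) x) = x) (hf : IsBoundedMeasurable f)
    (hg : IsBoundedMeasurable g) :
    ∫ x, g x * orbitAvg p T f x ∂μ = ∫ x, f x * orbitAvg p T g x ∂μ := by
  have hTm (j : G) : Measurable (T j) := (hT j).measurable
  have hshift (j : G) : ∫ x, g x * f (T j x) ∂μ = ∫ x, f x * g (T (-j) x) ∂μ := by
    have hm : Measurable fun x => g x * f (T j x) := (hg.mul (hf.comp (hTm j))).1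
    conv_lhs =>
      rw [← (hT (-j)).map_eq, integral_map (hTm (-j)).aemeasurable hm.aestronglyMeasurable]
    simp_rw [hT_neg, mul_comm]
  rw [integral_mul_orbitAvg hp hTm hf hg, integral_mul_orbitAvg hp hTm hg hf]
  conv_rhs => rw [← (Equiv.neg G).tsum_eq]
  exact tsum_congr fun j => by rw [Equiv.neg_apply, hp_neg, hshift]

end OrbitAverage

section ProdBool

variable {X : Type*} [MeasurableSpace X] {Q : Measure (X × Bool)} {μ ν : Measure X}

theorem measure_prod_bool_eq_map_add_map
    (htrue : ∀ A, MeasurableSet A → Q (A ×ˢ {true}) = μ A)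
    (hfalse : ∀ A, MeasurableSet A → Q (A ×ˢ {false}) = ν A) :
    Q = μ.map (·, true) + ν.map (·, false) := by
  ext S hS
  have hS₁ : MeasurableSet ((·, true) ⁻¹' S) := measurable_prodMk_right hS
  have hS₀ : MeasurableSet ((·, false) ⁻¹' S) := measurable_prodMk_right hS
  have hsplit : S = ((·, true) ⁻¹' S) ×ˢ {true} ∪ ((·, false) ⁻¹' S) ×ˢ {false} := by
    ext ⟨x, b⟩; cases b <;> simp
  rw [hsplit, measure_union (Set.disjoint_prod.2 (.inr (by simp)))
      (hS₀.prod (measurableSet_singleton _)), htrue _ hS₁, hfalse _ hS₀, ← hsplit,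
    Measure.add_apply, Measure.map_apply measurable_prodMk_right hS,
    Measure.map_apply measurable_prodMk_right hS]

theorem integral_eq_of_prod_bool
    (htrue : ∀ A, MeasurableSet A → Q (A ×ˢ {true}) = μ A)
    (hfalse : ∀ A, MeasurableSet A → Q (A ×ˢ {false}) = ν A) {h : X × Bool → ℝ}
    (hh : Integrable h Q) : ∫ x, h x ∂Q = ∫ x, h (x, true) ∂μ + ∫ x, h (x, false) ∂ν := by
  rw [measure_prod_bool_eq_map_add_map htrue hfalse] at hh ⊢
  obtain ⟨htrue_int, hfalse_int⟩ := integrable_add_measure.1 hh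
  rw [integral_add_measure htrue_int hfalse_int,
    integral_map measurable_prodMk_right.aemeasurable htrue_int.1,
    integral_map measurable_prodMk_right.aemeasurable hfalse_int.1]

theorem integral_eq_of_prod_bool_withDensity {P : Measure X} [IsFiniteMeasure P]
    [IsFiniteMeasure Q] {c : ℝ} (hc : 0 ≤ c) {w : X → ℝ} (hw : IsBoundedMeasurable w)
    (hw_nonneg : 0 ≤ w)
    (htrue : ∀ A, MeasurableSet A → Q (A ×ˢ {true}) = ENNReal.ofReal c * P A)
    (hfalse : ∀ A, MeasurableSet A → Q (A ×ˢ {false}) = ENNReal.ofReal (c * ∫ x in A, w x ∂P))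
    {h : X × Bool → ℝ} (hh : IsBoundedMeasurable h) :
    ∫ x, h x ∂Q = c * ∫ x, (h (x, true) + w x * h (x, false)) ∂P := by
  have hfalse' (A : Set X) (hA : MeasurableSet A) :
      Q (A ×ˢ {false}) =
        (ENNReal.ofReal c • P.withDensity fun x => ENNReal.ofReal (w x)) A := by
    rw [hfalse A hA, Measure.smul_apply, withDensity_apply _ hA,
      ← ofReal_integral_eq_lintegral_ofReal (hw.integrable _) (.of_forall hw_nonneg),
      ENNReal.ofReal_mul hc, smul_eq_mul]
  rw [integral_eq_of_prod_bool (μ := ENNReal.ofReal c • P) htrue hfalse' (hh.integrable Q),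
    integral_smul_measure, integral_smul_measure, ENNReal.toReal_ofReal hc,
    integral_withDensity_eq_integral_toReal_smul hw.1.ennreal_ofReal
      (.of_forall fun _ => ENNReal.ofReal_lt_top)]
  simp_rw [ENNReal.toReal_ofReal (hw_nonneg _), smul_eq_mul]
  rw [← mul_add, integral_add ((hh.comp measurable_prodMk_right).integrable P)
    ((hw.mul (hh.comp measurable_prodMk_right)).integrable P)]

end ProdBool

section Environment

variable {d K : ℕ}

theorem measurable_shiftT (j : ZLat d) : Measurable (shiftT (K := K) j) :=
  measurable_pi_lambda _ fun i => measurable_pi_apply (i + j)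

theorem shiftT_shiftT_neg (j : ZLat d) (e : EnvSpace d K) : shiftT j (shiftT (-j) e) = e := by
  funext i
  simp [shiftT]

theorem measurePreserving_shiftT {P : Measure (EnvSpace d K)}
    (hP : ∀ j A, MeasurableSet A → P (shiftT j ⁻¹' A) = P A) (j : ZLat d) :
    MeasurePreserving (shiftT j) P P :=
  ⟨measurable_shiftT j, Measure.ext fun A hA => by
    rw [Measure.map_apply (measurable_shiftT j) hA, hP j A hA]⟩

theorem isBoundedMeasurable_site (φ : Set.Icc (2 : ℤ) K × Set.Icc (2 : ℤ) K → ℝ) (i : ZLat d) :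
    IsBoundedMeasurable fun e : EnvSpace d K => φ (e i) :=
  (IsBoundedMeasurable.of_finite φ).comp (measurable_pi_apply i)

theorem nsize_pos (e : EnvSpace d K) (i : ZLat d) : 0 < Nsize e i := by
  have := (e i).1.2.1
  unfold Nsize
  positivity

theorem msize_pos (e : EnvSpace d K) (i : ZLat d) : 0 < Msize e i := by
  have := (e i).2.2.1
  unfold Msize
  positivity

theorem msize_div_nsize_nonneg : 0 ≤ fun e : EnvSpace d K => Msize e 0 / Nsize e 0 :=
  fun e => (div_pos (msize_pos e 0) (nsize_pos e 0)).le

theorem isBoundedMeasurable_msize_div_nsize :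
    IsBoundedMeasurable fun e : EnvSpace d K => Msize e 0 / Nsize e 0 :=
  isBoundedMeasurable_site (fun s => ((s.2 : ℤ) : ℝ) / ((s.1 : ℤ) : ℝ)) 0

theorem msize_div_nsize_mul_omegaE (a : ZLat d → ZLat d → ℝ) (lam : ℝ) (e : EnvSpace d K) :
    Msize e 0 / Nsize e 0 * omegaE a lam e 0 = qs a lam K := by
  have := (nsize_pos e 0).ne'
  have := (msize_pos e 0).ne'
  unfold omegaE qs
  field_simp

end Environment

section Operator

variable {d K : ℕ} {a : ZLat d → ZLat d → ℝ} {lam : ℝ}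

theorem summable_phat (ha : Summable (a 0)) : Summable (phat a lam K) :=
  ((ha.div_const (cRate a + lam * K)).update 0 (lam * K / (cRate a + lam * K))).congr fun i => by
    by_cases hi : i = 0 <;> simp [phat, hi]

theorem phat_neg (hsym : ∀ i, a 0 i = a 0 (-i)) (j : ZLat d) :
    phat a lam K (-j) = phat a lam K j := by
  simp only [phat, neg_eq_zero, ← hsym j]

theorem IsBoundedMeasurable.rop (ha : Summable (a 0)) {f : EnvSpace d K × Bool → ℝ}
    (hf : IsBoundedMeasurable f) : IsBoundedMeasurable (Rop a lam f) := by
  have hf₁ : IsBoundedMeasurable fun e : EnvSpace d K => f (e, true) :=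
    hf.comp measurable_prodMk_right
  have hf₀ : IsBoundedMeasurable fun e : EnvSpace d K => f (e, false) :=
    hf.comp measurable_prodMk_right
  have hω : IsBoundedMeasurable fun e : EnvSpace d K => omegaE a lam e 0 :=
    isBoundedMeasurable_site (fun s => lam * ((s.1 : ℤ) : ℝ) /
      (((s.2 : ℤ) : ℝ) * (cRate a + lam + lam * K))) 0
  refine .of_slices ?_ ?_
  · exact ((const _).mul hf₀).add
      ((const _).mul (hf₁.orbitAvg (summable_phat ha) measurable_shiftT))
  · exact (hω.mul hf₁).add (((const 1).sub hω).mul hf₀)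

theorem rop_detailed_balance (f g : EnvSpace d K × Bool → ℝ) (e : EnvSpace d K) :
    g (e, true) * Rop a lam f (e, true) - f (e, true) * Rop a lam g (e, true)
        + Msize e 0 / Nsize e 0 *
          (g (e, false) * Rop a lam f (e, false) - f (e, false) * Rop a lam g (e, false))
      = (1 - qs a lam K) *
          (g (e, true) * orbitAvg (phat a lam K) shiftT (fun e => f (e, true)) e
            - f (e, true) * orbitAvg (phat a lam K) shiftT (fun e => g (e, true)) e) := by
  simp only [Rop, orbitAvg]
  linear_combination (g (e, false) * f (e, true) - f (e, false) * g (e, true))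
    * msize_div_nsize_mul_omegaE a lam e

end Operator

theorem reversibility_of_environment_process_general
    (d K : ℕ)
    (a : ZLat d → ZLat d → ℝ) (lam : ℝ)
    (ha_sum : Summable (a 0))
    (Pbar : Measure (EnvSpace d K)) [IsProbabilityMeasure Pbar]
    (hPinv : ∀ (j : ZLat d) (A : Set (EnvSpace d K)), MeasurableSet A →
      Pbar (shiftT j ⁻¹' A) = Pbar A)
    (Q : Measure (EnvSpace d K × Bool)) [IsProbabilityMeasure Q]
    (hQ1 : ∀ A : Set (EnvSpace d K), MeasurableSet A →
      Q (A ×ˢ ({true} : Set Bool)) =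
        ENNReal.ofReal (1 / (1 + ∫ e', Msize e' 0 / Nsize e' 0 ∂Pbar)) * Pbar A)
    (hQ0 : ∀ A : Set (EnvSpace d K), MeasurableSet A →
      Q (A ×ˢ ({false} : Set Bool)) =
        ENNReal.ofReal ((1 / (1 + ∫ e', Msize e' 0 / Nsize e' 0 ∂Pbar)) *
          ∫ e' in A, Msize e' 0 / Nsize e' 0 ∂Pbar))
    (hsym : ∀ i : ZLat d, a 0 i = a 0 (-i)) :
    ∀ f g : EnvSpace d K × Bool → ℝ,
      Measurable f → (∃ C, ∀ x, |f x| ≤ C) →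
      Measurable g → (∃ C, ∀ x, |g x| ≤ C) →
      ∫ x, g x * Rop a lam f x ∂Q = ∫ x, f x * Rop a lam g x ∂Q := by
  intro f g hf hfb hg hgb
  have hc : 0 ≤ 1 / (1 + ∫ e', Msize e' 0 / Nsize e' 0 ∂Pbar) :=
    one_div_nonneg.2 (by linarith [integral_nonneg (μ := Pbar) msize_div_nsize_nonneg])
  have hf' : IsBoundedMeasurable f := ⟨hf, hfb⟩
  have hg' : IsBoundedMeasurable g := ⟨hg, hgb⟩
  have hgRf : IsBoundedMeasurable fun x => g x * Rop a lam f x := hg'.mul (hf'.rop ha_sum)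
  have hfRg : IsBoundedMeasurable fun x => f x * Rop a lam g x := hf'.mul (hg'.rop ha_sum)
  have hf₁ : IsBoundedMeasurable fun e : EnvSpace d K => f (e, true) :=
    hf'.comp measurable_prodMk_right
  have hg₁ : IsBoundedMeasurable fun e : EnvSpace d K => g (e, true) :=
    hg'.comp measurable_prodMk_right
  have hphat : Summable (phat a lam K) := summable_phat ha_sum
  have hSf := hf₁.orbitAvg hphat measurable_shiftT
  have hSg := hg₁.orbitAvg hphat measurable_shiftT
  rw [← sub_eq_zero, ← integral_sub (hgRf.integrable Q) (hfRg.integrable Q),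
    integral_eq_of_prod_bool_withDensity hc isBoundedMeasurable_msize_div_nsize
      msize_div_nsize_nonneg hQ1 hQ0 (hgRf.sub hfRg)]
  simp only [rop_detailed_balance]
  rw [integral_const_mul,
    integral_sub ((hg₁.mul hSf).integrable Pbar) ((hf₁.mul hSg).integrable Pbar),
    integral_mul_orbitAvg_comm hphat (phat_neg hsym) (measurePreserving_shiftT hPinv)
      shiftT_shiftT_neg hf₁ hg₁, sub_self, mul_zero, mul_zero]

/-- Reversibility of `Q` under symmetry of the migration kernel. -/
theorem reversibility_of_environment_process
    (d K : ℕ) (hd : 1 ≤ d) (hK : 2 ≤ K)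
    (a : ZLat d → ZLat d → ℝ) (lam : ℝ) (hlam : 0 < lam)
    (ha_nonneg : ∀ i j, 0 ≤ a i j)
    (ha_transl : ∀ i j, a i j = a 0 (j - i))
    (ha_irr : ∀ i : ZLat d, ∃ n : ℕ, 0 < convPow (a 0) n i)
    (ha_sum : Summable (a 0))
    (ha00 : 0 < a 0 0)
    (Pbar : Measure (EnvSpace d K)) [IsProbabilityMeasure Pbar]
    (hPinv : ∀ (j : ZLat d) (A : Set (EnvSpace d K)), MeasurableSet A →
      Pbar (shiftT j ⁻¹' A) = Pbar A)
    (hPerg : ∀ A : Set (EnvSpace d K), MeasurableSet A →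
      (∀ j : ZLat d, shiftT j ⁻¹' A = A) → Pbar A = 0 ∨ Pbar A = 1)
    (Q : Measure (EnvSpace d K × Bool)) [IsProbabilityMeasure Q]
    (hQ1 : ∀ A : Set (EnvSpace d K), MeasurableSet A →
      Q (A ×ˢ ({true} : Set Bool)) =
        ENNReal.ofReal (1 / (1 + ∫ e', Msize e' 0 / Nsize e' 0 ∂Pbar)) * Pbar A)
    (hQ0 : ∀ A : Set (EnvSpace d K), MeasurableSet A →
      Q (A ×ˢ ({false} : Set Bool)) =
        ENNReal.ofReal ((1 / (1 + ∫ e', Msize e' 0 / Nsize e' 0 ∂Pbar)) *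
          ∫ e' in A, Msize e' 0 / Nsize e' 0 ∂Pbar))
    (hsym : ∀ i : ZLat d, a 0 i = a 0 (-i)) :
    ∀ f g : EnvSpace d K × Bool → ℝ,
      Measurable f → (∃ C, ∀ x, |f x| ≤ C) →
      Measurable g → (∃ C, ∀ x, |g x| ≤ C) →
      ∫ x, g x * Rop a lam f x ∂Q = ∫ x, f x * Rop a lam g x ∂Q :=
  reversibility_of_environment_process_general d K a lam ha_sum Pbar hPinv Q hQ1 hQ0 hsym
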